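/- arXiv:1206.2574 — 3 statements merged into one kernel-verified Lean document; each statement's English description precedes it below -/
import Mathlib

section
/- For any Euclidean triangle with side lengths a, b, c > 0, the Euclidean area A satisfies A < (ab + bc + ca)/6. -/
/-- Heron's formula: the Euclidean area of a triangle with side lengths `a b c`. -/
noncomputable def heronArea (a b c : ℝ) : ℝ :=
  Real.sqrt ((a + b + c) * (a + b - c) * (b + c - a) * (a + c - b)) / 4

/-! Ravi substitution: with `x = b + c - a`, `y = a + c - b`, `z = a + b - c`, all nonnegative,
Heron's radicand is `(x + y + z) x y z`, which `(u + v + w)² ≥ 3 (u v + v w + w u)` applied to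
`u = x y`, `v = y z`, `w = z x` bounds by `(x y + y z + z x)² / 3`. Moreover
`x y + y z + z x = 2 (a b + b c + c a) - (a² + b² + c²) ≤ a b + b c + c a`, so
`4 √3 A ≤ a b + b c + c a`, and `4 √3 > 6`. -/

theorem three_mul_add_mul_mul_mul_le_sq {R : Type*} [CommRing R] [LinearOrder R]
    [IsStrictOrderedRing R] (x y z : R) :
    3 * ((x + y + z) * x * y * z) ≤ (x * y + y * z + z * x) ^ 2 := by
  nlinarith [sq_nonneg (x * y - y * z), sq_nonneg (y * z - z * x), sq_nonneg (z * x - x * y)]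

section Triangle

variable {a b c : ℝ} (habc : a ≤ b + c) (hbca : b ≤ a + c) (hcab : c ≤ a + b)
include habc hbca hcab

theorem three_mul_heron_radicand_le_sq :
    3 * ((a + b + c) * (a + b - c) * (b + c - a) * (a + c - b)) ≤
      (a * b + b * c + c * a) ^ 2 := by
  set x := b + c - a
  set y := a + c - b
  set z := a + b - c
  have hx : 0 ≤ x := by linarith
  have hy : 0 ≤ y := by linarith
  have hz : 0 ≤ z := by linarith
  have hq : x * y + y * z + z * x = 2 * (a * b + b * c + c * a) - (a ^ 2 + b ^ 2 + c ^ 2) := by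
    ring
  have hq_le : x * y + y * z + z * x ≤ a * b + b * c + c * a := by
    rw [hq]
    nlinarith [sq_nonneg (a - b), sq_nonneg (b - c), sq_nonneg (c - a)]
  calc 3 * ((a + b + c) * (a + b - c) * (b + c - a) * (a + c - b))
      = 3 * ((x + y + z) * x * y * z) := by ring
    _ ≤ (x * y + y * z + z * x) ^ 2 := three_mul_add_mul_mul_mul_le_sq x y z
    _ ≤ (a * b + b * c + c * a) ^ 2 := by gcongr

theorem heronArea_le_div_four_mul_sqrt_three :
    heronArea a b c ≤ (a * b + b * c + c * a) / (4 * √3) := by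
  have ha : 0 ≤ a := by linarith
  have hb : 0 ≤ b := by linarith
  have hc : 0 ≤ c := by linarith
  rw [heronArea, le_div_iff₀ (by positivity)]
  calc √((a + b + c) * (a + b - c) * (b + c - a) * (a + c - b)) / 4 * (4 * √3)
      = √(3 * ((a + b + c) * (a + b - c) * (b + c - a) * (a + c - b))) := by
        rw [Real.sqrt_mul (by norm_num : (0 : ℝ) ≤ 3)]; ring
    _ ≤ a * b + b * c + c * a :=
        Real.sqrt_le_iff.mpr ⟨by positivity, three_mul_heron_radicand_le_sq habc hbca hcab⟩

end Triangle

theorem six_lt_four_mul_sqrt_three : (6 : ℝ) < 4 * √3 :=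
  lt_of_pow_lt_pow_left₀ 2 (by positivity) (by rw [mul_pow, Real.sq_sqrt] <;> norm_num)

theorem heronArea_lt_simplicialArea_div_six_general (a b c : ℝ)
    (habc : a < b + c) (hbca : b < a + c) (hcab : c < a + b) :
    heronArea a b c < (a * b + b * c + c * a) / 6 := by
  have hS : 0 < a * b + b * c + c * a := by
    have ha : 0 < a := by linarith
    have hb : 0 < b := by linarith
    have hc : 0 < c := by linarith
    positivity
  calc heronArea a b c ≤ (a * b + b * c + c * a) / (4 * √3) :=
        heronArea_le_div_four_mul_sqrt_three habc.le hbca.le hcab.le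
    _ < (a * b + b * c + c * a) / 6 :=
        div_lt_div_of_pos_left hS (by norm_num) six_lt_four_mul_sqrt_three

/-- For any Euclidean triangle with side lengths `a, b, c > 0`, the Euclidean area `A`
satisfies `A < (ab + bc + ca)/6`. -/
theorem heronArea_lt_simplicialArea_div_six (a b c : ℝ)
    (ha : 0 < a) (hb : 0 < b) (hc : 0 < c)
    (habc : a < b + c) (hbca : b < a + c) (hcab : c < a + b) :
    heronArea a b c < (a * b + b * c + c * a) / 6 :=
  heronArea_lt_simplicialArea_div_six_general a b c habc hbca hcab
end

section
/- For a single triangle with positive edge lengths l_i, l_j, l_k and nonnegative image lengths L_i, L_j, L_k, with stretch factors σ_i = L_i/l_i etc., the simplicial energy (1/2)[(σ_i² + σ_j²)l_i l_j + (σ_j² + σ_k²)l_j l_k + (σ_k² + σ_i²)l_k l_i] is greater than or equal to the simplicial area L_i L_j + L_j L_k + L_k L_i, with equality if and only if σ_i = σ_j = σ_k. -/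
/-! Writing `Lᵢ = σᵢ lᵢ`, energy minus area is the weighted sum of squares
`½ (lᵢ lⱼ (σᵢ - σⱼ)² + lⱼ lₖ (σⱼ - σₖ)² + lₖ lᵢ (σₖ - σᵢ)²)`, which is nonnegative and, the
weights being positive, vanishes exactly when the three stretch factors agree. -/

section

variable {K : Type*} [Field K] [LinearOrder K] [IsStrictOrderedRing K]

theorem energy_sub_area_eq_half_weighted_sq (σi σj σk li lj lk : K) :
    (1 / 2) * ((σi ^ 2 + σj ^ 2) * li * lj + (σj ^ 2 + σk ^ 2) * lj * lk
        + (σk ^ 2 + σi ^ 2) * lk * li)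
      - (σi * li * (σj * lj) + σj * lj * (σk * lk) + σk * lk * (σi * li))
      = (1 / 2) * (li * lj * (σi - σj) ^ 2 + lj * lk * (σj - σk) ^ 2
        + lk * li * (σk - σi) ^ 2) := by
  ring

theorem weighted_sq_sum_eq_zero_iff {σi σj σk li lj lk : K}
    (hli : 0 < li) (hlj : 0 < lj) (hlk : 0 < lk) :
    li * lj * (σi - σj) ^ 2 + lj * lk * (σj - σk) ^ 2 + lk * li * (σk - σi) ^ 2 = 0 ↔
      σi = σj ∧ σj = σk := by
  have hij : 0 ≤ li * lj * (σi - σj) ^ 2 := by positivity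
  have hjk : 0 ≤ lj * lk * (σj - σk) ^ 2 := by positivity
  have hki : 0 ≤ lk * li * (σk - σi) ^ 2 := by positivity
  rw [add_eq_zero_iff_of_nonneg (by positivity) hki, add_eq_zero_iff_of_nonneg hij hjk]
  simp only [mul_eq_zero, hli.ne', hlj.ne', hlk.ne', false_or, ne_eq, OfNat.ofNat_ne_zero,
    not_false_eq_true, pow_eq_zero_iff, sub_eq_zero]
  constructor
  · rintro ⟨⟨hσij, hσjk⟩, -⟩
    exact ⟨hσij, hσjk⟩
  · rintro ⟨rfl, rfl⟩
    exact ⟨⟨rfl, rfl⟩, rfl⟩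

theorem area_le_energy_and_eq_iff {σi σj σk li lj lk : K}
    (hli : 0 < li) (hlj : 0 < lj) (hlk : 0 < lk) :
    σi * li * (σj * lj) + σj * lj * (σk * lk) + σk * lk * (σi * li) ≤
        (1 / 2) * ((σi ^ 2 + σj ^ 2) * li * lj + (σj ^ 2 + σk ^ 2) * lj * lk
          + (σk ^ 2 + σi ^ 2) * lk * li) ∧
      ((1 / 2) * ((σi ^ 2 + σj ^ 2) * li * lj + (σj ^ 2 + σk ^ 2) * lj * lk
          + (σk ^ 2 + σi ^ 2) * lk * li)
        = σi * li * (σj * lj) + σj * lj * (σk * lk) + σk * lk * (σi * li) ↔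
        σi = σj ∧ σj = σk) := by
  have hdiff := energy_sub_area_eq_half_weighted_sq σi σj σk li lj lk
  refine ⟨sub_nonneg.mp (hdiff ▸ by positivity), ?_⟩
  rw [← sub_eq_zero, hdiff, mul_eq_zero, or_iff_right (by norm_num)]
  exact weighted_sq_sum_eq_zero_iff hli hlj hlk

end

theorem simplicialEnergy_ge_simplicialArea_triangle_general
    (li lj lk Li Lj Lk : ℝ)
    (hli : 0 < li) (hlj : 0 < lj) (hlk : 0 < lk) :
    (1 / 2) * (((Li / li) ^ 2 + (Lj / lj) ^ 2) * li * lj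
        + ((Lj / lj) ^ 2 + (Lk / lk) ^ 2) * lj * lk
        + ((Lk / lk) ^ 2 + (Li / li) ^ 2) * lk * li)
      ≥ Li * Lj + Lj * Lk + Lk * Li ∧
    ((1 / 2) * (((Li / li) ^ 2 + (Lj / lj) ^ 2) * li * lj
        + ((Lj / lj) ^ 2 + (Lk / lk) ^ 2) * lj * lk
        + ((Lk / lk) ^ 2 + (Li / li) ^ 2) * lk * li)
      = Li * Lj + Lj * Lk + Lk * Li ↔ Li / li = Lj / lj ∧ Lj / lj = Lk / lk) := by
  simpa only [div_mul_cancel₀ _ hli.ne', div_mul_cancel₀ _ hlj.ne', div_mul_cancel₀ _ hlk.ne']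
    using area_le_energy_and_eq_iff (σi := Li / li) (σj := Lj / lj) (σk := Lk / lk) hli hlj hlk

/-- For a single triangle with positive edge lengths `lᵢ, lⱼ, lₖ` and nonnegative image
lengths `Lᵢ, Lⱼ, Lₖ`, with stretch factors `σᵢ = Lᵢ/lᵢ` etc., the simplicial energy is at
least the simplicial area, with equality iff `σᵢ = σⱼ = σₖ`. -/
theorem simplicialEnergy_ge_simplicialArea_triangle
    (li lj lk Li Lj Lk : ℝ)
    (hli : 0 < li) (hlj : 0 < lj) (hlk : 0 < lk)
    (hLi : 0 ≤ Li) (hLj : 0 ≤ Lj) (hLk : 0 ≤ Lk) :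
    (1 / 2) * (((Li / li) ^ 2 + (Lj / lj) ^ 2) * li * lj
        + ((Lj / lj) ^ 2 + (Lk / lk) ^ 2) * lj * lk
        + ((Lk / lk) ^ 2 + (Li / li) ^ 2) * lk * li)
      ≥ Li * Lj + Lj * Lk + Lk * Li ∧
    ((1 / 2) * (((Li / li) ^ 2 + (Lj / lj) ^ 2) * li * lj
        + ((Lj / lj) ^ 2 + (Lk / lk) ^ 2) * lj * lk
        + ((Lk / lk) ^ 2 + (Li / li) ^ 2) * lk * li)
      = Li * Lj + Lj * Lk + Lk * Li ↔ Li / li = Lj / lj ∧ Lj / lj = Lk / lk) :=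
  simplicialEnergy_ge_simplicialArea_triangle_general li lj lk Li Lj Lk hli hlj hlk
end

section
/- (Boundedness of minimizing sequences) Let τ be a triangulation of a closed surface and for each n let (L_i^n)_i be nonnegative reals indexed by edges, satisfying the triangle inequality in each triangle, such that the sequence A_n = Σ_{triangles} (L_i^n L_j^n + L_j^n L_k^n + L_k^n L_i^n) is bounded. Then for every edge e_0 the sequence (L_0^n) is bounded. -/
/-!
If `a ≤ b + c` with `a, b, c ≥ 0`, then `a² ≤ ab + ac ≤ ab + bc + ca`. So the square of every
edge length is bounded by the contribution of any triangle containing that edge to `Aₙ`, hence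
by `Aₙ` itself, since all contributions are nonnegative.
-/

def pairwiseProductSum (x : Fin 3 → ℝ) : ℝ :=
  x 0 * x 1 + x 1 * x 2 + x 2 * x 0

lemma pairwiseProductSum_nonneg {x : Fin 3 → ℝ} (hx : ∀ k, 0 ≤ x k) :
    0 ≤ pairwiseProductSum x := by
  have := hx 0; have := hx 1; have := hx 2
  unfold pairwiseProductSum; positivity

lemma sq_le_mul_add_mul_add_mul {a b c : ℝ} (ha : 0 ≤ a) (hb : 0 ≤ b) (hc : 0 ≤ c)
    (habc : a ≤ b + c) : a ^ 2 ≤ a * b + b * c + c * a := by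
  nlinarith [mul_le_mul_of_nonneg_left habc ha, mul_nonneg hb hc]

lemma sq_le_pairwiseProductSum {x : Fin 3 → ℝ} (hx : ∀ k, 0 ≤ x k)
    (htri : x 0 ≤ x 1 + x 2 ∧ x 1 ≤ x 0 + x 2 ∧ x 2 ≤ x 0 + x 1) (k : Fin 3) :
    x k ^ 2 ≤ pairwiseProductSum x := by
  obtain ⟨h0, h1, h2⟩ := htri
  unfold pairwiseProductSum
  fin_cases k
  · exact sq_le_mul_add_mul_add_mul (hx 0) (hx 1) (hx 2) h0
  · show x 1 ^ 2 ≤ _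
    linarith [sq_le_mul_add_mul_add_mul (hx 1) (hx 0) (hx 2) h1]
  · show x 2 ^ 2 ≤ _
    linarith [sq_le_mul_add_mul_add_mul (hx 2) (hx 0) (hx 1) h2]

/-- Boundedness of area-minimizing sequences: if nonnegative edge lengths `Lⁿ` indexed by
the edges of a triangulation satisfy the triangle inequality in each triangle and the
simplicial areas `Aₙ = Σ_T (LᵢLⱼ + LⱼLₖ + LₖLᵢ)` are bounded, then the lengths of each
fixed edge form a bounded sequence. (Every edge lies in a triangle.) -/
theorem minimizing_sequence_bounded {T ι : Type*} [Fintype T]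
    (edges : T → Fin 3 → ι)
    (hsurj : ∀ e : ι, ∃ (t : T) (k : Fin 3), edges t k = e)
    (L : ℕ → ι → ℝ) (hnn : ∀ n i, 0 ≤ L n i)
    (htri : ∀ (n : ℕ) (t : T), L n (edges t 0) ≤ L n (edges t 1) + L n (edges t 2)
      ∧ L n (edges t 1) ≤ L n (edges t 0) + L n (edges t 2)
      ∧ L n (edges t 2) ≤ L n (edges t 0) + L n (edges t 1))
    (C : ℝ)
    (hA : ∀ n, ∑ t : T, (L n (edges t 0) * L n (edges t 1)
        + L n (edges t 1) * L n (edges t 2)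
        + L n (edges t 2) * L n (edges t 0)) ≤ C) :
    ∀ e : ι, ∃ B : ℝ, ∀ n, L n e ≤ B := by
  intro e
  obtain ⟨t, k, rfl⟩ := hsurj e
  refine ⟨√C, fun n => Real.le_sqrt_of_sq_le ?_⟩
  calc L n (edges t k) ^ 2 ≤ pairwiseProductSum (fun j => L n (edges t j)) :=
        sq_le_pairwiseProductSum (fun j => hnn n _) (htri n t) k
    _ ≤ ∑ s, pairwiseProductSum (fun j => L n (edges s j)) :=
        Finset.single_le_sum (fun s _ => pairwiseProductSum_nonneg fun j => hnn n _)
          (Finset.mem_univ t)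
    _ ≤ C := hA n
end
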